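/- arXiv:math/0504185 — 5 statements merged into one kernel-verified Lean document; each statement's English description precedes it below -/
import Mathlib

section
/- Contact circles (and hence contact p-spheres for p ≥ 1) do not exist on any manifold of dimension 4n+1. -/
open scoped BigOperators

noncomputable section

/-- Exterior derivative of a 1-form on `ℝ^m`, evaluated at `x` on `u`, `v`. -/
def extd {m : ℕ} (ω : (Fin m → ℝ) → (Fin m → ℝ) →L[ℝ] ℝ)
    (x u v : Fin m → ℝ) : ℝ :=
  fderiv ℝ (fun y => ω y v) x u - fderiv ℝ (fun y => ω y u) x v

/-- Evaluation of `a ∧ b^n` (with `a` a 1-form value and `b` a 2-form value) on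
`2n+1` tangent vectors of `ℝ^(2n+1)`. -/
def wedgeEval (n : ℕ) (a : (Fin (2 * n + 1) → ℝ) →L[ℝ] ℝ)
    (b : (Fin (2 * n + 1) → ℝ) → (Fin (2 * n + 1) → ℝ) → ℝ)
    (v : Fin (2 * n + 1) → Fin (2 * n + 1) → ℝ) : ℝ :=
  ∑ σ : Equiv.Perm (Fin (2 * n + 1)),
    ((Equiv.Perm.sign σ : ℤ) : ℝ) * a (v (σ 0)) *
      ∏ i : Fin n,
        b (v (σ ⟨2 * (i : ℕ) + 1, by have := i.isLt; omega⟩))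
          (v (σ ⟨2 * (i : ℕ) + 2, by have := i.isLt; omega⟩))

/-- `ω` is a contact form on `ℝ^(2m+1)` (model of a `(2m+1)`-manifold):
`ω ∧ (dω)^m` is nowhere vanishing. -/
def IsContactForm (m : ℕ) (ω : (Fin (2 * m + 1) → ℝ) → (Fin (2 * m + 1) → ℝ) →L[ℝ] ℝ) : Prop :=
  ∀ x : Fin (2 * m + 1) → ℝ, ∃ v : Fin (2 * m + 1) → Fin (2 * m + 1) → ℝ,
    wedgeEval m (ω x) (extd ω x) v ≠ 0

/-! ### Auxiliary index lemmas -/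

def oIdx (m : ℕ) (i : Fin m) : Fin (2*m+1) := ⟨2*(i:ℕ)+1, by have := i.isLt; omega⟩
def tIdx (m : ℕ) (i : Fin m) : Fin (2*m+1) := ⟨2*(i:ℕ)+2, by have := i.isLt; omega⟩

lemma idx_trichotomy (m : ℕ) (j : Fin (2*m+1)) :
    j = 0 ∨ (∃ i, j = oIdx m i) ∨ (∃ i, j = tIdx m i) := by
  rcases Nat.even_or_odd j.val with he | ho
  · rcases Nat.eq_zero_or_pos j.val with h0 | hp
    · left; exact Fin.ext h0
    · right; right
      obtain ⟨k, hk⟩ := he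
      refine ⟨⟨k-1, by have := j.isLt; omega⟩, Fin.ext ?_⟩
      simp only [tIdx]; omega
  · right; left
    obtain ⟨k, hk⟩ := ho
    refine ⟨⟨k, by have := j.isLt; omega⟩, Fin.ext ?_⟩
    simp only [oIdx]; omega

lemma oIdx_ne_zero {m : ℕ} (i : Fin m) : oIdx m i ≠ 0 := by
  simp only [oIdx, ne_eq, Fin.ext_iff, Fin.val_zero, Fin.val_mk]; omega

lemma tIdx_ne_zero {m : ℕ} (i : Fin m) : tIdx m i ≠ 0 := by
  simp only [tIdx, ne_eq, Fin.ext_iff, Fin.val_zero, Fin.val_mk]; omega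

lemma tIdx_ne_oIdx {m : ℕ} (i i' : Fin m) : tIdx m i ≠ oIdx m i' := by
  simp only [tIdx, oIdx, ne_eq, Fin.ext_iff, Fin.val_mk]; omega

lemma oIdx_ne_oIdx {m : ℕ} {i i' : Fin m} (h : i ≠ i') : oIdx m i ≠ oIdx m i' := by
  intro hc
  have hv := congrArg Fin.val hc
  simp only [oIdx, Fin.val_mk] at hv
  exact h (Fin.ext (by omega))

lemma tIdx_ne_tIdx {m : ℕ} {i i' : Fin m} (h : i ≠ i') : tIdx m i ≠ tIdx m i' := by
  intro hc
  have hv := congrArg Fin.val hc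
  simp only [tIdx, Fin.val_mk] at hv
  exact h (Fin.ext (by omega))

/-! ### The multilinear map underlying `wedgeEval` -/

/-- The multilinear map `v ↦ a(v 0) * ∏ B (v (2i+1)) (v (2i+2))`. -/
def wedgeML (m : ℕ) (a : (Fin (2*m+1) → ℝ) →L[ℝ] ℝ)
    (B : (Fin (2*m+1) → ℝ) →ₗ[ℝ] (Fin (2*m+1) → ℝ) →ₗ[ℝ] ℝ) :
    MultilinearMap ℝ (fun _ : Fin (2*m+1) => (Fin (2*m+1) → ℝ)) ℝ where
  toFun v := a (v 0) * ∏ i : Fin m, B (v (oIdx m i)) (v (tIdx m i))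
  map_update_add' := by
    intro _ v j x y
    rcases idx_trichotomy m j with h0 | ⟨i₀, rfl⟩ | ⟨i₀, rfl⟩
    · subst h0
      have hprod : ∀ z, ∏ i : Fin m, B (Function.update v 0 z (oIdx m i))
          (Function.update v 0 z (tIdx m i)) = ∏ i : Fin m, B (v (oIdx m i)) (v (tIdx m i)) := by
        intro z
        refine Finset.prod_congr rfl fun i _ => ?_
        rw [Function.update_of_ne (oIdx_ne_zero i), Function.update_of_ne (tIdx_ne_zero i)]
      simp only [hprod, Function.update_self, map_add, add_mul]
    · have ha : ∀ z, Function.update v (oIdx m i₀) z 0 = v 0 := fun z =>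
        Function.update_of_ne (Ne.symm (oIdx_ne_zero i₀)) _ _
      have key : ∀ z, ∏ i : Fin m, B (Function.update v (oIdx m i₀) z (oIdx m i))
          (Function.update v (oIdx m i₀) z (tIdx m i)) =
          B z (v (tIdx m i₀)) * ∏ i ∈ Finset.univ.erase i₀, B (v (oIdx m i)) (v (tIdx m i)) := by
        intro z
        rw [← Finset.mul_prod_erase _ _ (Finset.mem_univ i₀),
          Function.update_self, Function.update_of_ne (tIdx_ne_oIdx i₀ i₀)]
        congr 1
        refine Finset.prod_congr rfl fun i hi => ?_
        have hne : i ≠ i₀ := Finset.ne_of_mem_erase hi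
        rw [Function.update_of_ne (oIdx_ne_oIdx hne), Function.update_of_ne (tIdx_ne_oIdx i i₀)]
      simp only [ha, key, map_add, LinearMap.add_apply]
      ring
    · have ha : ∀ z, Function.update v (tIdx m i₀) z 0 = v 0 := fun z =>
        Function.update_of_ne (Ne.symm (tIdx_ne_zero i₀)) _ _
      have key : ∀ z, ∏ i : Fin m, B (Function.update v (tIdx m i₀) z (oIdx m i))
          (Function.update v (tIdx m i₀) z (tIdx m i)) =
          B (v (oIdx m i₀)) z * ∏ i ∈ Finset.univ.erase i₀, B (v (oIdx m i)) (v (tIdx m i)) := by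
        intro z
        rw [← Finset.mul_prod_erase _ _ (Finset.mem_univ i₀),
          Function.update_self, Function.update_of_ne (Ne.symm (tIdx_ne_oIdx i₀ i₀))]
        congr 1
        refine Finset.prod_congr rfl fun i hi => ?_
        have hne : i ≠ i₀ := Finset.ne_of_mem_erase hi
        rw [Function.update_of_ne (Ne.symm (tIdx_ne_oIdx i₀ i)),
          Function.update_of_ne (tIdx_ne_tIdx hne)]
      simp only [ha, key, map_add]
      ring
  map_update_smul' := by
    intro _ v j c x
    rcases idx_trichotomy m j with h0 | ⟨i₀, rfl⟩ | ⟨i₀, rfl⟩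
    · subst h0
      have hprod : ∀ z, ∏ i : Fin m, B (Function.update v 0 z (oIdx m i))
          (Function.update v 0 z (tIdx m i)) = ∏ i : Fin m, B (v (oIdx m i)) (v (tIdx m i)) := by
        intro z
        refine Finset.prod_congr rfl fun i _ => ?_
        rw [Function.update_of_ne (oIdx_ne_zero i), Function.update_of_ne (tIdx_ne_zero i)]
      simp only [hprod, Function.update_self, map_smul, smul_eq_mul]
      ring
    · have ha : ∀ z, Function.update v (oIdx m i₀) z 0 = v 0 := fun z =>
        Function.update_of_ne (Ne.symm (oIdx_ne_zero i₀)) _ _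
      have key : ∀ z, ∏ i : Fin m, B (Function.update v (oIdx m i₀) z (oIdx m i))
          (Function.update v (oIdx m i₀) z (tIdx m i)) =
          B z (v (tIdx m i₀)) * ∏ i ∈ Finset.univ.erase i₀, B (v (oIdx m i)) (v (tIdx m i)) := by
        intro z
        rw [← Finset.mul_prod_erase _ _ (Finset.mem_univ i₀),
          Function.update_self, Function.update_of_ne (tIdx_ne_oIdx i₀ i₀)]
        congr 1
        refine Finset.prod_congr rfl fun i hi => ?_
        have hne : i ≠ i₀ := Finset.ne_of_mem_erase hi
        rw [Function.update_of_ne (oIdx_ne_oIdx hne), Function.update_of_ne (tIdx_ne_oIdx i i₀)]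
      simp only [ha, key, map_smul, LinearMap.smul_apply, smul_eq_mul]
      ring
    · have ha : ∀ z, Function.update v (tIdx m i₀) z 0 = v 0 := fun z =>
        Function.update_of_ne (Ne.symm (tIdx_ne_zero i₀)) _ _
      have key : ∀ z, ∏ i : Fin m, B (Function.update v (tIdx m i₀) z (oIdx m i))
          (Function.update v (tIdx m i₀) z (tIdx m i)) =
          B (v (oIdx m i₀)) z * ∏ i ∈ Finset.univ.erase i₀, B (v (oIdx m i)) (v (tIdx m i)) := by
        intro z
        rw [← Finset.mul_prod_erase _ _ (Finset.mem_univ i₀),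
          Function.update_self, Function.update_of_ne (Ne.symm (tIdx_ne_oIdx i₀ i₀))]
        congr 1
        refine Finset.prod_congr rfl fun i hi => ?_
        have hne : i ≠ i₀ := Finset.ne_of_mem_erase hi
        rw [Function.update_of_ne (Ne.symm (tIdx_ne_oIdx i₀ i)),
          Function.update_of_ne (tIdx_ne_tIdx hne)]
      simp only [ha, key, map_smul, smul_eq_mul]
      ring

lemma wedgeEval_eq_alternatization (m : ℕ) (a : (Fin (2*m+1) → ℝ) →L[ℝ] ℝ)
    (B : (Fin (2*m+1) → ℝ) →ₗ[ℝ] (Fin (2*m+1) → ℝ) →ₗ[ℝ] ℝ)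
    (v : Fin (2*m+1) → (Fin (2*m+1) → ℝ)) :
    wedgeEval m a (fun u w => B u w) v = (wedgeML m a B).alternatization v := by
  rw [MultilinearMap.alternatization_apply]
  refine Finset.sum_congr rfl fun σ _ => ?_
  rw [MultilinearMap.domDomCongr_apply]
  show _ = (Equiv.Perm.sign σ) •
    ((wedgeML m a B) (v ∘ σ))
  simp only [wedgeML, MultilinearMap.coe_mk, Function.comp, oIdx, tIdx,
    Units.smul_def, zsmul_eq_mul, mul_assoc]

/-- Key linear-algebra fact: if the top-degree form `wedgeEval m a b` vanishes on the
standard basis, it vanishes on every tuple of vectors. -/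
lemma wedge_vanish (m : ℕ) (a : (Fin (2*m+1) → ℝ) →L[ℝ] ℝ)
    (B : (Fin (2*m+1) → ℝ) →ₗ[ℝ] (Fin (2*m+1) → ℝ) →ₗ[ℝ] ℝ)
    (h : wedgeEval m a (fun u w => B u w) (fun i => Pi.basisFun ℝ (Fin (2*m+1)) i) = 0)
    (v : Fin (2*m+1) → (Fin (2*m+1) → ℝ)) :
    wedgeEval m a (fun u w => B u w) v = 0 := by
  rw [wedgeEval_eq_alternatization] at h ⊢
  set f := (wedgeML m a B).alternatization with hf
  have he := f.eq_smul_basis_det (Pi.basisFun ℝ (Fin (2*m+1)))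
  have hv : f v = f (⇑(Pi.basisFun ℝ (Fin (2*m+1)))) •
      (Pi.basisFun ℝ (Fin (2*m+1))).det v := by
    conv_lhs => rw [he]
    rfl
  rw [hv]
  have h' : f (⇑(Pi.basisFun ℝ (Fin (2*m+1)))) = 0 := h
  rw [h', zero_smul]

/-! ### Bilinearity of `extd` for smooth forms -/

lemma diffAt_apply {m : ℕ} {ω : (Fin m → ℝ) → (Fin m → ℝ) →L[ℝ] ℝ} (hω : ContDiff ℝ (⊤ : ℕ∞) ω)
    (u x : Fin m → ℝ) : DifferentiableAt ℝ (fun y => ω y u) x :=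
  ((hω.differentiable (by simp)) x).clm_apply (differentiableAt_const u)

lemma extd_add_left {m : ℕ} {ω : (Fin m → ℝ) → (Fin m → ℝ) →L[ℝ] ℝ} (hω : ContDiff ℝ (⊤ : ℕ∞) ω)
    (x u u' w : Fin m → ℝ) :
    extd ω x (u + u') w = extd ω x u w + extd ω x u' w := by
  unfold extd
  have h1 : (fun y => ω y (u + u')) = fun y => ω y u + ω y u' := by
    funext y; exact map_add _ _ _
  rw [h1, fderiv_fun_add (diffAt_apply hω u x) (diffAt_apply hω u' x)]
  simp only [map_add, ContinuousLinearMap.add_apply]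
  ring

lemma extd_smul_left {m : ℕ} {ω : (Fin m → ℝ) → (Fin m → ℝ) →L[ℝ] ℝ} (hω : ContDiff ℝ (⊤ : ℕ∞) ω)
    (c : ℝ) (x u w : Fin m → ℝ) :
    extd ω x (c • u) w = c * extd ω x u w := by
  unfold extd
  have h1 : (fun y => ω y (c • u)) = fun y => c • ω y u := by
    funext y; exact map_smul _ _ _
  rw [h1, fderiv_fun_const_smul (diffAt_apply hω u x)]
  simp only [map_smul, ContinuousLinearMap.smul_apply, smul_eq_mul]
  ring

lemma extd_add_right {m : ℕ} {ω : (Fin m → ℝ) → (Fin m → ℝ) →L[ℝ] ℝ} (hω : ContDiff ℝ (⊤ : ℕ∞) ω)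
    (x u w w' : Fin m → ℝ) :
    extd ω x u (w + w') = extd ω x u w + extd ω x u w' := by
  unfold extd
  have h1 : (fun y => ω y (w + w')) = fun y => ω y w + ω y w' := by
    funext y; exact map_add _ _ _
  rw [h1, fderiv_fun_add (diffAt_apply hω w x) (diffAt_apply hω w' x)]
  simp only [map_add, ContinuousLinearMap.add_apply]
  ring

lemma extd_smul_right {m : ℕ} {ω : (Fin m → ℝ) → (Fin m → ℝ) →L[ℝ] ℝ} (hω : ContDiff ℝ (⊤ : ℕ∞) ω)
    (c : ℝ) (x u w : Fin m → ℝ) :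
    extd ω x u (c • w) = c * extd ω x u w := by
  unfold extd
  have h1 : (fun y => ω y (c • w)) = fun y => c • ω y w := by
    funext y; exact map_smul _ _ _
  rw [h1, fderiv_fun_const_smul (diffAt_apply hω w x)]
  simp only [map_smul, ContinuousLinearMap.smul_apply, smul_eq_mul]
  ring

/-- `extd ω x` as a bilinear map. -/
def extdLM {m : ℕ} (ω : (Fin m → ℝ) → (Fin m → ℝ) →L[ℝ] ℝ) (hω : ContDiff ℝ (⊤ : ℕ∞) ω)
    (x : Fin m → ℝ) : (Fin m → ℝ) →ₗ[ℝ] (Fin m → ℝ) →ₗ[ℝ] ℝ :=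
  LinearMap.mk₂ ℝ (extd ω x) (extd_add_left hω x) (fun c u w => extd_smul_left hω c x u w)
    (extd_add_right hω x) (fun c u w => extd_smul_right hω c x u w)

@[simp] lemma extdLM_apply {m : ℕ} (ω : (Fin m → ℝ) → (Fin m → ℝ) →L[ℝ] ℝ)
    (hω : ContDiff ℝ (⊤ : ℕ∞) ω) (x u w : Fin m → ℝ) : extdLM ω hω x u w = extd ω x u w := rfl

lemma extd_comb {m : ℕ} {ω₁ ω₂ : (Fin m → ℝ) → (Fin m → ℝ) →L[ℝ] ℝ}
    (h₁ : ContDiff ℝ (⊤ : ℕ∞) ω₁) (h₂ : ContDiff ℝ (⊤ : ℕ∞) ω₂) (l₁ l₂ : ℝ) (x u w : Fin m → ℝ) :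
    extd (fun y => l₁ • ω₁ y + l₂ • ω₂ y) x u w
      = l₁ * extd ω₁ x u w + l₂ * extd ω₂ x u w := by
  unfold extd
  have e1 : ∀ z : Fin m → ℝ, (fun y => (l₁ • ω₁ y + l₂ • ω₂ y) z)
      = fun y => l₁ • (ω₁ y z) + l₂ • (ω₂ y z) := by
    intro z; funext y; simp
  rw [e1, e1,
    fderiv_fun_add ((diffAt_apply h₁ w x).fun_const_smul l₁) ((diffAt_apply h₂ w x).fun_const_smul l₂),
    fderiv_fun_add ((diffAt_apply h₁ u x).fun_const_smul l₁) ((diffAt_apply h₂ u x).fun_const_smul l₂),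
    fderiv_fun_const_smul (diffAt_apply h₁ w x), fderiv_fun_const_smul (diffAt_apply h₂ w x),
    fderiv_fun_const_smul (diffAt_apply h₁ u x), fderiv_fun_const_smul (diffAt_apply h₂ u x)]
  simp only [ContinuousLinearMap.add_apply, ContinuousLinearMap.smul_apply, smul_eq_mul]
  ring

/-! ### The odd polynomial on the circle -/

/-- Evaluation of the candidate contact condition on the standard basis, as a function
of the circle parameter `t`. -/
def gfun (n : ℕ) (ω₁ ω₂ : (Fin (2 * (2 * n) + 1) → ℝ) → (Fin (2 * (2 * n) + 1) → ℝ) →L[ℝ] ℝ)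
    (t : ℝ) : ℝ :=
  wedgeEval (2 * n) (Real.cos t • ω₁ 0 + Real.sin t • ω₂ 0)
    (fun u w => Real.cos t * extd ω₁ 0 u w + Real.sin t * extd ω₂ 0 u w)
    (fun i => Pi.basisFun ℝ (Fin (2 * (2 * n) + 1)) i)

lemma gfun_continuous (n : ℕ)
    (ω₁ ω₂ : (Fin (2 * (2 * n) + 1) → ℝ) → (Fin (2 * (2 * n) + 1) → ℝ) →L[ℝ] ℝ) :
    Continuous (gfun n ω₁ ω₂) := by
  unfold gfun wedgeEval
  apply continuous_finset_sum
  intro σ _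
  apply Continuous.mul
  · apply Continuous.mul continuous_const
    simp only [ContinuousLinearMap.add_apply, ContinuousLinearMap.coe_smul',
      Pi.smul_apply, smul_eq_mul]
    fun_prop
  · apply continuous_finset_prod
    intro i _
    fun_prop

lemma gfun_odd (n : ℕ)
    (ω₁ ω₂ : (Fin (2 * (2 * n) + 1) → ℝ) → (Fin (2 * (2 * n) + 1) → ℝ) →L[ℝ] ℝ)
    (t : ℝ) : gfun n ω₁ ω₂ (t + Real.pi) = - gfun n ω₁ ω₂ t := by
  unfold gfun wedgeEval
  rw [Real.cos_add_pi, Real.sin_add_pi, ← Finset.sum_neg_distrib]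
  refine Finset.sum_congr rfl fun σ _ => ?_
  set e : Fin (2 * (2 * n) + 1) → (Fin (2 * (2 * n) + 1) → ℝ) :=
    fun i => Pi.basisFun ℝ (Fin (2 * (2 * n) + 1)) i with he
  have ha : (-Real.cos t • ω₁ 0 + -Real.sin t • ω₂ 0) (e (σ 0))
      = -((Real.cos t • ω₁ 0 + Real.sin t • ω₂ 0) (e (σ 0))) := by
    simp only [ContinuousLinearMap.add_apply, ContinuousLinearMap.coe_smul',
      Pi.smul_apply, smul_eq_mul]
    ring
  have hb : (∏ i : Fin (2 * n),
      (-Real.cos t * extd ω₁ 0 (e (σ ⟨2 * (i : ℕ) + 1, by have := i.isLt; omega⟩))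
          (e (σ ⟨2 * (i : ℕ) + 2, by have := i.isLt; omega⟩))
        + -Real.sin t * extd ω₂ 0 (e (σ ⟨2 * (i : ℕ) + 1, by have := i.isLt; omega⟩))
          (e (σ ⟨2 * (i : ℕ) + 2, by have := i.isLt; omega⟩))))
      = ∏ i : Fin (2 * n),
      (Real.cos t * extd ω₁ 0 (e (σ ⟨2 * (i : ℕ) + 1, by have := i.isLt; omega⟩))
          (e (σ ⟨2 * (i : ℕ) + 2, by have := i.isLt; omega⟩))
        + Real.sin t * extd ω₂ 0 (e (σ ⟨2 * (i : ℕ) + 1, by have := i.isLt; omega⟩))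
          (e (σ ⟨2 * (i : ℕ) + 2, by have := i.isLt; omega⟩))) := by
    have hfac : ∀ X Y : ℝ, -Real.cos t * X + -Real.sin t * Y
        = (-1) * (Real.cos t * X + Real.sin t * Y) := by intro X Y; ring
    simp only [hfac]
    rw [Finset.prod_mul_distrib, Finset.prod_const]
    simp only [Finset.card_univ, Fintype.card_fin]
    rw [Even.neg_one_pow (even_two_mul n), one_mul]
  rw [ha, hb]
  ring

/-- Contact circles (hence contact p-spheres, p ≥ 1) do not exist on a manifold
of dimension `4n+1`: no pair of smooth 1-forms has all of its normalized linear
combinations contact forms.  (Here `4n+1 = 2(2n)+1`, i.e. `m = 2n`.) -/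
theorem stmt2 (n : ℕ) (ω₁ ω₂ : (Fin (2 * (2 * n) + 1) → ℝ) → (Fin (2 * (2 * n) + 1) → ℝ) →L[ℝ] ℝ)
    (h₁ : ContDiff ℝ (⊤ : ℕ∞) ω₁) (h₂ : ContDiff ℝ (⊤ : ℕ∞) ω₂) :
    ¬ (∀ l₁ l₂ : ℝ, l₁ ^ 2 + l₂ ^ 2 = 1 →
        IsContactForm (2 * n) (fun y => l₁ • ω₁ y + l₂ • ω₂ y)) := by
  intro H
  -- the function `gfun` is continuous and odd on the circle, so it vanishes somewhere
  have hπ : gfun n ω₁ ω₂ Real.pi = - gfun n ω₁ ω₂ 0 := by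
    simpa using gfun_odd n ω₁ ω₂ 0
  have hmem : (0 : ℝ) ∈ Set.uIcc (gfun n ω₁ ω₂ 0) (gfun n ω₁ ω₂ Real.pi) := by
    rw [hπ, Set.mem_uIcc]
    rcases le_total (gfun n ω₁ ω₂ 0) 0 with h | h
    · left; exact ⟨h, by linarith⟩
    · right; exact ⟨by linarith, h⟩
  obtain ⟨t, _, hgt⟩ := intermediate_value_uIcc
    ((gfun_continuous n ω₁ ω₂).continuousOn (s := Set.uIcc 0 Real.pi)) hmem
  -- at the corresponding point of the circle, the contact condition fails
  have hcirc : Real.cos t ^ 2 + Real.sin t ^ 2 = 1 := Real.cos_sq_add_sin_sq t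
  obtain ⟨v, hv⟩ := H (Real.cos t) (Real.sin t) hcirc 0
  apply hv
  -- identify the form and its exterior derivative with linear-algebra data
  have hbeq : extd (fun y => Real.cos t • ω₁ y + Real.sin t • ω₂ y) 0
      = fun u w => (Real.cos t • extdLM ω₁ h₁ 0 + Real.sin t • extdLM ω₂ h₂ 0) u w := by
    funext u w
    simp only [LinearMap.add_apply, LinearMap.smul_apply, extdLM_apply, smul_eq_mul]
    exact extd_comb h₁ h₂ (Real.cos t) (Real.sin t) 0 u w
  show wedgeEval (2 * n) ((fun y => Real.cos t • ω₁ y + Real.sin t • ω₂ y) 0)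
    (extd (fun y => Real.cos t • ω₁ y + Real.sin t • ω₂ y) 0) v = 0
  rw [hbeq]
  apply wedge_vanish
  -- the value on the standard basis is `gfun n ω₁ ω₂ t = 0`
  have : wedgeEval (2 * n) ((fun y => Real.cos t • ω₁ y + Real.sin t • ω₂ y) 0)
      (fun u w => (Real.cos t • extdLM ω₁ h₁ 0 + Real.sin t • extdLM ω₂ h₂ 0) u w)
      (fun i => Pi.basisFun ℝ (Fin (2 * (2 * n) + 1)) i) = gfun n ω₁ ω₂ t := by
    unfold gfun
    have hb2 : (fun u w => (Real.cos t • extdLM ω₁ h₁ 0 + Real.sin t • extdLM ω₂ h₂ 0) u w)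
        = fun u w : Fin (2 * (2 * n) + 1) → ℝ =>
            Real.cos t * extd ω₁ 0 u w + Real.sin t * extd ω₂ 0 u w := by
      funext u w
      simp only [LinearMap.add_apply, LinearMap.smul_apply, extdLM_apply, smul_eq_mul]
    rw [hb2]
  rw [this, hgt]

end
end

section
/- Let ω₁,…,ω_{p+1} generate a contact p-sphere with Reeb vector fields R₁,…,R_{p+1}. The contact p-sphere is round (i.e. for all normalized (λᵢ), the Reeb field of Σλᵢωᵢ is Σλᵢ Rᵢ) if and only if: (i) ωᵢ(Rⱼ) + ωⱼ(Rᵢ) = 0 for all i ≠ j, and (ii) Rᵢ ⨼ dωⱼ + Rⱼ ⨼ dωᵢ = 0 for all i, j. -/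
open scoped BigOperators

private lemma sum_pair_diag {n : ℕ} (f : Fin n → Fin n → ℝ)
    (h : ∀ i j, i ≠ j → f i j + f j i = 0) :
    ∑ i, ∑ j, f i j = ∑ i, f i i := by
  have hswap : ∑ i, ∑ j, f i j = ∑ i : Fin n, ∑ j : Fin n, f j i := Finset.sum_comm
  have key : ∀ i : Fin n, ∑ j, (f i j + f j i) = 2 * f i i := by
    intro i
    have he : ∀ j : Fin n, f i j + f j i = if j = i then 2 * f i i else 0 := by
      intro j
      by_cases hji : j = i
      · subst hji; simp; ring
      · simp [hji, h i j (fun e => hji e.symm)]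
    simp only [he]
    simp
  have hsum : (∑ i, ∑ j, f i j) + (∑ i : Fin n, ∑ j : Fin n, f j i)
      = ∑ i, 2 * f i i := by
    rw [← Finset.sum_add_distrib]
    refine Finset.sum_congr rfl fun i _ => ?_
    rw [← Finset.sum_add_distrib, key i]
  rw [← hswap] at hsum
  have hd : ∑ i, 2 * f i i = 2 * ∑ i, f i i := by rw [Finset.mul_sum]
  linarith

private lemma sum_indicator_pair {n : ℕ} {A : Type*} [AddCommMonoid A]
    (i j : Fin n) (hij : i ≠ j) (g : Fin n → A)
    (hg : ∀ k, k ≠ i → k ≠ j → g k = 0) :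
    ∑ k, g k = g i + g j := by
  rw [← Finset.sum_subset (Finset.subset_univ ({i, j} : Finset (Fin n)))]
  · rw [Finset.sum_pair hij]
  · intro k _ hk
    simp only [Finset.mem_insert, Finset.mem_singleton, not_or] at hk
    exact hg k hk.1 hk.2

set_option maxHeartbeats 1600000 in
/-- Characterization of round contact p-spheres (Lemma on roundness): with
`ω₁,…,ω_{p+1}` generating a contact p-sphere on `M` (tangent spaces modelled by
`V`, `dωᵢ` the exterior derivatives, `Rᵢ` the Reeb fields, so `ωᵢ(Rᵢ) = 1` and
`Rᵢ ⨼ dωᵢ = 0`), the contact p-sphere is round — i.e. for every normalized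
`(λᵢ)` the Reeb field of `Σλᵢωᵢ` is `ΣλᵢRᵢ` — iff
(i) `ωᵢ(Rⱼ) + ωⱼ(Rᵢ) = 0` for `i ≠ j`, and
(ii) `Rᵢ ⨼ dωⱼ + Rⱼ ⨼ dωᵢ = 0` for all `i, j`. -/
theorem stmt5 {M V : Type*} [AddCommGroup V] [Module ℝ V] (p : ℕ)
    (ω : Fin (p + 1) → M → V →ₗ[ℝ] ℝ)
    (dω : Fin (p + 1) → M → V →ₗ[ℝ] V →ₗ[ℝ] ℝ)
    (R : Fin (p + 1) → M → V)
    (hReeb1 : ∀ i x, ω i x (R i x) = 1)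
    (hReeb2 : ∀ i x v, dω i x (R i x) v = 0) :
    (∀ l : Fin (p + 1) → ℝ, ∑ i, l i ^ 2 = 1 → ∀ x : M,
        (∑ i, l i • ω i x) (∑ i, l i • R i x) = 1 ∧
        ∀ v : V, (∑ i, l i • dω i x) (∑ i, l i • R i x) v = 0)
    ↔ ((∀ x : M, ∀ i j, i ≠ j → ω i x (R j x) + ω j x (R i x) = 0) ∧
       (∀ x : M, ∀ i j, ∀ v : V,
          dω j x (R i x) v + dω i x (R j x) v = 0)) := by
  constructor
  · intro h
    -- set up the special coefficient family
    set s : ℝ := Real.sqrt (1 / 2) with hs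
    have hs2 : s ^ 2 = 1 / 2 := Real.sq_sqrt (by norm_num)
    have main : ∀ (i j : Fin (p + 1)), i ≠ j → ∀ x : M,
        (ω i x (R j x) + ω j x (R i x) = 0 ∧
         ∀ v, dω i x (R j x) v + dω j x (R i x) v = 0) := by
      intro i j hij x
      set l : Fin (p + 1) → ℝ := fun k => if k = i then s else if k = j then s else 0 with hl
      have hnorm : ∑ k, l k ^ 2 = 1 := by
        rw [sum_indicator_pair i j hij _ (fun k hki hkj => by simp [hl, hki, hkj])]
        simp [hl, hij.symm, hs2]
        norm_num
      obtain ⟨h1, h2⟩ := h l hnorm x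
      have hR : ∑ k, l k • R k x = s • R i x + s • R j x := by
        rw [sum_indicator_pair i j hij _ (fun k hki hkj => by simp [hl, hki, hkj])]
        simp [hl, hij.symm]
      have hω : ∑ k, l k • ω k x = s • ω i x + s • ω j x := by
        rw [sum_indicator_pair i j hij _ (fun k hki hkj => by simp [hl, hki, hkj])]
        simp [hl, hij.symm]
      have hdω : ∑ k, l k • dω k x = s • dω i x + s • dω j x := by
        rw [sum_indicator_pair i j hij _ (fun k hki hkj => by simp [hl, hki, hkj])]
        simp [hl, hij.symm]
      rw [hω, hR] at h1
      rw [hdω, hR] at h2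
      simp only [LinearMap.add_apply, LinearMap.smul_apply, map_add, map_smul,
        smul_eq_mul, hReeb1, hReeb2] at h1 h2
      constructor
      · nlinarith [h1, hs2]
      · intro v
        have := h2 v
        nlinarith [this, hs2]
    refine ⟨fun x i j hij => (main i j hij x).1, fun x i j v => ?_⟩
    by_cases hij : i = j
    · subst hij; simp [hReeb2]
    · have := ((main i j hij x).2 v)
      linarith
  · rintro ⟨hsym, hd⟩ l hl x
    have expand : ∀ (F : Fin (p + 1) → V →ₗ[ℝ] ℝ),
        (∑ i, l i • F i) (∑ j, l j • R j x) = ∑ i, ∑ j, l i * l j * F i (R j x) := by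
      intro F
      rw [LinearMap.sum_apply]
      refine Finset.sum_congr rfl fun i _ => ?_
      rw [LinearMap.smul_apply, map_sum, Finset.smul_sum]
      refine Finset.sum_congr rfl fun j _ => ?_
      rw [map_smul]
      simp only [smul_eq_mul]
      ring
    constructor
    · rw [expand (fun i => ω i x)]
      rw [sum_pair_diag _ (fun i j hij => by
        have := hsym x i j hij
        have : l i * l j * ω i x (R j x) + l j * l i * ω j x (R i x)
            = l i * l j * (ω i x (R j x) + ω j x (R i x)) := by ring
        rw [this, hsym x i j hij, mul_zero])]
      simp only [hReeb1, mul_one]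
      rw [← hl]
      exact Finset.sum_congr rfl fun i _ => by ring
    · intro v
      have expand2 : (∑ i, l i • dω i x) (∑ j, l j • R j x) v
          = ∑ i, ∑ j, l i * l j * dω i x (R j x) v := by
        rw [LinearMap.sum_apply, LinearMap.sum_apply]
        refine Finset.sum_congr rfl fun i _ => ?_
        rw [LinearMap.smul_apply, LinearMap.smul_apply, map_sum, LinearMap.sum_apply,
          Finset.smul_sum]
        refine Finset.sum_congr rfl fun j _ => ?_
        rw [map_smul]
        simp only [smul_eq_mul, LinearMap.smul_apply]
        ring
      rw [expand2]
      rw [sum_pair_diag _ (fun i j hij => by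
        have h' : l i * l j * dω i x (R j x) v + l j * l i * dω j x (R i x) v
            = l i * l j * (dω i x (R j x) v + dω j x (R i x) v) := by ring
        rw [h', hd x j i v, mul_zero])]
      simp [hReeb2]
end

section
/- The Reeb vector fields of two generating elements of a contact circle are linearly independent at every point. -/
open scoped BigOperators

noncomputable section

namespace ContactAux

def P1 (n : ℕ) (i : Fin n) : Fin (2 * n + 1) := ⟨2 * (i : ℕ) + 1, by have := i.isLt; omega⟩
def P2 (n : ℕ) (i : Fin n) : Fin (2 * n + 1) := ⟨2 * (i : ℕ) + 2, by have := i.isLt; omega⟩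

lemma wedgeEval_eq {n : ℕ} (a : (Fin (2 * n + 1) → ℝ) →L[ℝ] ℝ)
    (b : (Fin (2 * n + 1) → ℝ) → (Fin (2 * n + 1) → ℝ) → ℝ)
    (v : Fin (2 * n + 1) → Fin (2 * n + 1) → ℝ) :
    wedgeEval n a b v = ∑ σ : Equiv.Perm (Fin (2 * n + 1)),
      ((Equiv.Perm.sign σ : ℤ) : ℝ) * a (v (σ 0)) *
        ∏ i : Fin n, b (v (σ (P1 n i))) (v (σ (P2 n i))) := rfl

lemma tri {n : ℕ} (k : Fin (2 * n + 1)) :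
    k = 0 ∨ (∃ i, k = P1 n i) ∨ (∃ i, k = P2 n i) := by
  rcases Nat.even_or_odd (k : ℕ) with ⟨t, ht⟩ | ⟨t, ht⟩
  · rcases Nat.eq_zero_or_pos t with rfl | hpos
    · left; rw [Fin.ext_iff, Fin.val_zero]; omega
    · right; right
      have hk := k.isLt
      refine ⟨⟨t - 1, by omega⟩, ?_⟩
      rw [Fin.ext_iff]; simp [P2]; omega
  · right; left
    have hk := k.isLt
    refine ⟨⟨t, by omega⟩, ?_⟩
    rw [Fin.ext_iff]; simp [P1]; omega

lemma P1_ne_zero {n : ℕ} (i : Fin n) : P1 n i ≠ 0 := by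
  rw [Ne, Fin.ext_iff]; simp [P1]
lemma P2_ne_zero {n : ℕ} (i : Fin n) : P2 n i ≠ 0 := by
  rw [Ne, Fin.ext_iff]; simp [P2]
lemma P1_ne_P2 {n : ℕ} (i i' : Fin n) : P1 n i ≠ P2 n i' := by
  rw [Ne, Fin.ext_iff]; simp [P1, P2]; omega
lemma P1_inj {n : ℕ} {i i' : Fin n} (h : P1 n i = P1 n i') : i = i' := by
  rw [Fin.ext_iff] at h ⊢; simpa [P1] using h
lemma P2_inj {n : ℕ} {i i' : Fin n} (h : P2 n i = P2 n i') : i = i' := by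
  rw [Fin.ext_iff] at h ⊢; simpa [P2] using h

lemma extd_antisymm {m : ℕ} (ω : (Fin m → ℝ) → (Fin m → ℝ) →L[ℝ] ℝ)
    (x u v : Fin m → ℝ) : extd ω x u v = - extd ω x v u := by
  simp only [extd]; ring

lemma diff_apply {m : ℕ} {ω : (Fin m → ℝ) → (Fin m → ℝ) →L[ℝ] ℝ}
    (h : ContDiff ℝ (⊤ : ℕ∞) ω) (x w : Fin m → ℝ) :
    DifferentiableAt ℝ (fun y => ω y w) x :=
  (h.differentiable (by simp) x).clm_apply (differentiableAt_const w)

lemma extd_add_left {m : ℕ} {ω : (Fin m → ℝ) → (Fin m → ℝ) →L[ℝ] ℝ}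
    (h : ContDiff ℝ (⊤ : ℕ∞) ω) (x z z' w : Fin m → ℝ) :
    extd ω x (z + z') w = extd ω x z w + extd ω x z' w := by
  simp only [extd]
  have h1 : (fun y => ω y (z + z')) = fun y => ω y z + ω y z' := by
    funext y; exact (ω y).map_add z z'
  rw [map_add, h1, fderiv_fun_add (diff_apply h x z) (diff_apply h x z')]
  simp only [ContinuousLinearMap.add_apply]
  ring

lemma extd_smul_left {m : ℕ} {ω : (Fin m → ℝ) → (Fin m → ℝ) →L[ℝ] ℝ}
    (h : ContDiff ℝ (⊤ : ℕ∞) ω) (x : Fin m → ℝ) (c : ℝ) (z w : Fin m → ℝ) :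
    extd ω x (c • z) w = c * extd ω x z w := by
  simp only [extd]
  have h1 : (fun y => ω y (c • z)) = fun y => c • ω y z := by
    funext y; exact (ω y).map_smul c z
  rw [map_smul, h1, fderiv_fun_const_smul (diff_apply h x z) c]
  simp only [ContinuousLinearMap.smul_apply, smul_eq_mul]
  ring

lemma extd_comb {m : ℕ} {ω₁ ω₂ : (Fin m → ℝ) → (Fin m → ℝ) →L[ℝ] ℝ}
    (h₁ : ContDiff ℝ (⊤ : ℕ∞) ω₁) (h₂ : ContDiff ℝ (⊤ : ℕ∞) ω₂) (l₁ l₂ : ℝ) (x z w : Fin m → ℝ) :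
    extd (fun y => l₁ • ω₁ y + l₂ • ω₂ y) x z w
      = l₁ * extd ω₁ x z w + l₂ * extd ω₂ x z w := by
  have key : ∀ q : Fin m → ℝ, fderiv ℝ (fun y => l₁ * (ω₁ y q) + l₂ * (ω₂ y q)) x
      = l₁ • fderiv ℝ (fun y => ω₁ y q) x + l₂ • fderiv ℝ (fun y => ω₂ y q) x := by
    intro q
    have e1 : (fun y => l₁ * (ω₁ y q) + l₂ * (ω₂ y q))
        = fun y => l₁ • (ω₁ y q) + l₂ • (ω₂ y q) := by
      funext y; rw [smul_eq_mul, smul_eq_mul]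
    rw [e1, fderiv_fun_add (f := fun y => l₁ • ω₁ y q) (g := fun y => l₂ • ω₂ y q)
        ((diff_apply h₁ x q).const_smul l₁) ((diff_apply h₂ x q).const_smul l₂),
      fderiv_fun_const_smul (diff_apply h₁ x q) l₁, fderiv_fun_const_smul (diff_apply h₂ x q) l₂]
  simp only [extd, ContinuousLinearMap.add_apply, ContinuousLinearMap.smul_apply, smul_eq_mul]
  rw [key w, key z]
  simp only [ContinuousLinearMap.add_apply, ContinuousLinearMap.smul_apply, smul_eq_mul]
  ring



def bLin {n : ℕ} (b : (Fin (2 * n + 1) → ℝ) → (Fin (2 * n + 1) → ℝ) → ℝ)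
    (hba : ∀ x y w, b (x + y) w = b x w + b y w)
    (hbs : ∀ (c : ℝ) x w, b (c • x) w = c * b x w)
    (z : Fin (2 * n + 1) → ℝ) : (Fin (2 * n + 1) → ℝ) →ₗ[ℝ] ℝ where
  toFun w := b w z
  map_add' x y := hba x y z
  map_smul' c x := by simpa using hbs c x z

lemma term_linear {n : ℕ} [inst : DecidableEq (Fin (2 * n + 1))]
    (a : (Fin (2 * n + 1) → ℝ) →L[ℝ] ℝ)
    (b : (Fin (2 * n + 1) → ℝ) → (Fin (2 * n + 1) → ℝ) → ℝ)
    (hba : ∀ x y w, b (x + y) w = b x w + b y w)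
    (hbs : ∀ (c : ℝ) x w, b (c • x) w = c * b x w)
    (hanti : ∀ x y, b x y = - b y x)
    (σ : Equiv.Perm (Fin (2 * n + 1))) (j : Fin (2 * n + 1))
    (v : Fin (2 * n + 1) → Fin (2 * n + 1) → ℝ) :
    ∃ L : (Fin (2 * n + 1) → ℝ) →ₗ[ℝ] ℝ, ∀ x,
      ((@Equiv.Perm.sign (Fin (2 * n + 1)) (instDecidableEqFin (2 * n + 1)) _ σ : ℤ) : ℝ) *
        a (Function.update v j x (σ 0)) *
        ∏ i : Fin n, b (Function.update v j x (σ (P1 n i)))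
          (Function.update v j x (σ (P2 n i))) = L x := by
  have key : ∀ k : Fin (2 * n + 1), k ≠ σ.symm j → σ k ≠ j := fun k hk h =>
    hk (by rw [← h, Equiv.symm_apply_apply])
  rcases tri (σ.symm j) with h0 | ⟨i₀, hi⟩ | ⟨i₀, hi⟩
  · refine ⟨(((@Equiv.Perm.sign (Fin (2 * n + 1)) (instDecidableEqFin (2 * n + 1)) _ σ : ℤ) : ℝ) *
        ∏ i : Fin n, b (v (σ (P1 n i))) (v (σ (P2 n i)))) •
        (a : (Fin (2 * n + 1) → ℝ) →ₗ[ℝ] ℝ), fun x => ?_⟩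
    have e0 : σ 0 = j := by rw [← h0, Equiv.apply_symm_apply]
    have n1 : ∀ i : Fin n, σ (P1 n i) ≠ j := fun i => key _ (h0 ▸ P1_ne_zero i)
    have n2 : ∀ i : Fin n, σ (P2 n i) ≠ j := fun i => key _ (h0 ▸ P2_ne_zero i)
    rw [show Function.update v j x (σ 0) = x by rw [e0]; exact Function.update_self _ _ _]
    rw [Finset.prod_congr rfl (fun i _ => by
      rw [Function.update_of_ne (n1 i), Function.update_of_ne (n2 i)])]
    simp only [LinearMap.smul_apply, ContinuousLinearMap.coe_coe, smul_eq_mul]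
    ring
  · refine ⟨(((@Equiv.Perm.sign (Fin (2 * n + 1)) (instDecidableEqFin (2 * n + 1)) _ σ : ℤ) : ℝ) * a (v (σ 0)) *
        ∏ i ∈ Finset.univ.erase i₀, b (v (σ (P1 n i))) (v (σ (P2 n i)))) •
        bLin b hba hbs (v (σ (P2 n i₀))), fun x => ?_⟩
    have e0 : σ (P1 n i₀) = j := by rw [← hi, Equiv.apply_symm_apply]
    have n0 : σ 0 ≠ j := key 0 (by rw [hi]; exact (P1_ne_zero i₀).symm)
    have n2 : ∀ i : Fin n, σ (P2 n i) ≠ j := fun i =>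
      key _ (by rw [hi]; exact (P1_ne_P2 i₀ i).symm)
    have n1 : ∀ i : Fin n, i ≠ i₀ → σ (P1 n i) ≠ j := fun i hii =>
      key _ (by rw [hi]; exact fun h => hii (P1_inj h))
    rw [Function.update_of_ne n0]
    rw [← Finset.mul_prod_erase Finset.univ _ (Finset.mem_univ i₀)]
    rw [show Function.update v j x (σ (P1 n i₀)) = x by
      rw [e0]; exact Function.update_self _ _ _]
    rw [Function.update_of_ne (n2 i₀)]
    rw [Finset.prod_congr rfl (fun i hi' => by
      rw [Function.update_of_ne (n1 i (Finset.ne_of_mem_erase hi')),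
          Function.update_of_ne (n2 i)])]
    simp only [LinearMap.smul_apply, smul_eq_mul, bLin, LinearMap.coe_mk, AddHom.coe_mk]
    ring
  · refine ⟨(-(((@Equiv.Perm.sign (Fin (2 * n + 1)) (instDecidableEqFin (2 * n + 1)) _ σ : ℤ) : ℝ) * a (v (σ 0)) *
        ∏ i ∈ Finset.univ.erase i₀, b (v (σ (P1 n i))) (v (σ (P2 n i))))) •
        bLin b hba hbs (v (σ (P1 n i₀))), fun x => ?_⟩
    have e0 : σ (P2 n i₀) = j := by rw [← hi, Equiv.apply_symm_apply]
    have n0 : σ 0 ≠ j := key 0 (by rw [hi]; exact (P2_ne_zero i₀).symm)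
    have n1 : ∀ i : Fin n, σ (P1 n i) ≠ j := fun i =>
      key _ (by rw [hi]; exact P1_ne_P2 i i₀)
    have n2 : ∀ i : Fin n, i ≠ i₀ → σ (P2 n i) ≠ j := fun i hii =>
      key _ (by rw [hi]; exact fun h => hii (P2_inj h))
    rw [Function.update_of_ne n0]
    rw [← Finset.mul_prod_erase Finset.univ _ (Finset.mem_univ i₀)]
    rw [show Function.update v j x (σ (P2 n i₀)) = x by
      rw [e0]; exact Function.update_self _ _ _]
    rw [Function.update_of_ne (n1 i₀)]
    rw [Finset.prod_congr rfl (fun i hi' => by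
      rw [Function.update_of_ne (n1 i),
          Function.update_of_ne (n2 i (Finset.ne_of_mem_erase hi'))])]
    rw [hanti (v (σ (P1 n i₀))) x]
    simp only [LinearMap.smul_apply, smul_eq_mul, bLin, LinearMap.coe_mk, AddHom.coe_mk]
    ring

def W {n : ℕ} (a : (Fin (2 * n + 1) → ℝ) →L[ℝ] ℝ)
    (b : (Fin (2 * n + 1) → ℝ) → (Fin (2 * n + 1) → ℝ) → ℝ)
    (hba : ∀ x y w, b (x + y) w = b x w + b y w)
    (hbs : ∀ (c : ℝ) x w, b (c • x) w = c * b x w)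
    (hanti : ∀ x y, b x y = - b y x) :
    MultilinearMap ℝ (fun _ : Fin (2 * n + 1) => (Fin (2 * n + 1) → ℝ)) ℝ where
  toFun := wedgeEval n a b
  map_update_add' := by
    intro inst v j x y
    rw [wedgeEval_eq, wedgeEval_eq, wedgeEval_eq, ← Finset.sum_add_distrib]
    refine Finset.sum_congr rfl fun σ _ => ?_
    obtain ⟨L, hL⟩ := term_linear (inst := inst) a b hba hbs hanti σ j v
    refine (hL (x + y)).trans ?_
    rw [map_add]
    exact congrArg₂ (· + ·) (hL x).symm (hL y).symm
  map_update_smul' := by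
    intro inst v j c x
    rw [wedgeEval_eq, wedgeEval_eq, Finset.smul_sum]
    refine Finset.sum_congr rfl fun σ _ => ?_
    obtain ⟨L, hL⟩ := term_linear (inst := inst) a b hba hbs hanti σ j v
    refine (hL (c • x)).trans ?_
    rw [map_smul]
    exact congrArg (fun r => c • r) (hL x).symm



def Alt {n : ℕ} (a : (Fin (2 * n + 1) → ℝ) →L[ℝ] ℝ)
    (b : (Fin (2 * n + 1) → ℝ) → (Fin (2 * n + 1) → ℝ) → ℝ)
    (hba : ∀ x y w, b (x + y) w = b x w + b y w)
    (hbs : ∀ (c : ℝ) x w, b (c • x) w = c * b x w)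
    (hanti : ∀ x y, b x y = - b y x) :
    (Fin (2 * n + 1) → ℝ) [⋀^Fin (2 * n + 1)]→ₗ[ℝ] ℝ :=
  { W a b hba hbs hanti with
    map_eq_zero_of_eq' := by
      intro v s t hv hst
      show wedgeEval n a b v = 0
      rw [wedgeEval_eq]
      set g : Equiv.Perm (Fin (2 * n + 1)) → ℝ := fun σ =>
        ((Equiv.Perm.sign σ : ℤ) : ℝ) * a (v (σ 0)) *
          ∏ i : Fin n, b (v (σ (P1 n i))) (v (σ (P2 n i))) with hg
      have hvτ : ∀ k, v (Equiv.swap s t k) = v k := by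
        intro k
        rcases eq_or_ne k s with rfl | h1
        · rw [Equiv.swap_apply_left]; exact hv.symm
        rcases eq_or_ne k t with rfl | h2
        · rw [Equiv.swap_apply_right]; exact hv
        · rw [Equiv.swap_apply_of_ne_of_ne h1 h2]
      have hneg : ∀ σ, g (Equiv.swap s t * σ) = - g σ := by
        intro σ
        have h1 : ∀ k, v ((Equiv.swap s t * σ) k) = v (σ k) := fun k => by
          rw [Equiv.Perm.mul_apply]; exact hvτ _
        rw [hg]
        simp only [Equiv.Perm.sign_mul, Equiv.Perm.sign_swap hst, h1]
        push_cast
        ring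
      have h2 : ∑ σ : Equiv.Perm (Fin (2 * n + 1)), g σ = ∑ σ, g (Equiv.swap s t * σ) :=
        (Fintype.sum_equiv (Equiv.mulLeft (Equiv.swap s t))
          (fun σ => g (Equiv.swap s t * σ)) g (fun σ => rfl)).symm
      have h3 : ∑ σ : Equiv.Perm (Fin (2 * n + 1)), g σ
          = - ∑ σ : Equiv.Perm (Fin (2 * n + 1)), g σ := by
        conv_lhs => rw [h2]
        rw [← Finset.sum_neg_distrib]
        exact Finset.sum_congr rfl fun σ _ => hneg σ
      linarith }

lemma wedgeEval_eq_zero_of_slot {n : ℕ} (a : (Fin (2 * n + 1) → ℝ) →L[ℝ] ℝ)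
    (b : (Fin (2 * n + 1) → ℝ) → (Fin (2 * n + 1) → ℝ) → ℝ)
    (hanti : ∀ x y, b x y = - b y x)
    (u : Fin (2 * n + 1) → ℝ) (hau : a u = 0) (hbu : ∀ w, b u w = 0)
    (v : Fin (2 * n + 1) → Fin (2 * n + 1) → ℝ) (p : Fin (2 * n + 1)) (hp : v p = u) :
    wedgeEval n a b v = 0 := by
  rw [wedgeEval_eq]
  refine Finset.sum_eq_zero fun σ _ => ?_
  rcases tri (σ.symm p) with h0 | ⟨i₀, hi⟩ | ⟨i₀, hi⟩
  · have e0 : σ 0 = p := by rw [← h0, Equiv.apply_symm_apply]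
    rw [e0, hp, hau, mul_zero, zero_mul]
  · have e0 : σ (P1 n i₀) = p := by rw [← hi, Equiv.apply_symm_apply]
    rw [Finset.prod_eq_zero (Finset.mem_univ i₀) (by rw [e0, hp, hbu]), mul_zero]
  · have e0 : σ (P2 n i₀) = p := by rw [← hi, Equiv.apply_symm_apply]
    rw [Finset.prod_eq_zero (Finset.mem_univ i₀)
      (by rw [e0, hp, hanti _ u, hbu, neg_zero]), mul_zero]

lemma wedge_zero {n : ℕ} (a : (Fin (2 * n + 1) → ℝ) →L[ℝ] ℝ)
    (b : (Fin (2 * n + 1) → ℝ) → (Fin (2 * n + 1) → ℝ) → ℝ)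
    (hba : ∀ x y w, b (x + y) w = b x w + b y w)
    (hbs : ∀ (c : ℝ) x w, b (c • x) w = c * b x w)
    (hanti : ∀ x y, b x y = - b y x)
    (u : Fin (2 * n + 1) → ℝ) (hu : u ≠ 0) (hau : a u = 0) (hbu : ∀ w, b u w = 0)
    (v : Fin (2 * n + 1) → Fin (2 * n + 1) → ℝ) :
    wedgeEval n a b v = 0 := by
  classical
  obtain ⟨p, hp⟩ : ∃ p, u p ≠ 0 := by
    by_contra h; push_neg at h; exact hu (funext h)
  set f := Alt a b hba hbs hanti with hf
  set e := Pi.basisFun ℝ (Fin (2 * n + 1)) with he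
  set w : Fin (2 * n + 1) → (Fin (2 * n + 1) → ℝ) := Function.update (⇑e) p u with hw
  have hfw : f w = 0 := by
    apply wedgeEval_eq_zero_of_slot a b hanti u hau hbu w p
    rw [hw]; exact Function.update_self _ _ _
  have hdet : e.det w = u p := by
    have hu' : u = ∑ i, u i • e i := by
      funext k
      simp only [he, Pi.basisFun_apply, Finset.sum_apply, Pi.smul_apply, smul_eq_mul]
      rw [Finset.sum_eq_single k]
      · simp
      · intro i _ hik
        rw [Pi.single_eq_of_ne (Ne.symm hik), mul_zero]
      · intro h; exact absurd (Finset.mem_univ k) h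
    have step1 : e.det w = ∑ i, e.det (Function.update (⇑e) p (u i • e i)) := by
      rw [hw]
      conv_lhs => rw [hu']
      exact (e.det).toMultilinearMap.map_update_sum Finset.univ p _ ⇑e
    rw [step1]
    have step2 : ∀ i, e.det (Function.update (⇑e) p (u i • e i))
        = u i * e.det (Function.update (⇑e) p (e i)) := fun i =>
      (e.det).toMultilinearMap.map_update_smul ⇑e p (u i) (e i)
    rw [Finset.sum_congr rfl fun i _ => step2 i]
    rw [Finset.sum_eq_single p]
    · rw [Function.update_eq_self, Module.Basis.det_self, mul_one]
    · intro i _ hip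
      have : e.det (Function.update (⇑e) p (e i)) = 0 := by
        apply (e.det).map_eq_zero_of_eq _ (i := p) (j := i)
        · rw [Function.update_self, Function.update_of_ne hip]
        · exact Ne.symm hip
      rw [this, mul_zero]
    · intro h; exact absurd (Finset.mem_univ p) h
  have hfe : f ⇑e = 0 := by
    have h3 := f.eq_smul_basis_det e
    have h4 : f w = f ⇑e • e.det w := by
      conv_lhs => rw [h3]
      simp
    rw [hfw, hdet, smul_eq_mul] at h4
    exact ((mul_eq_zero.mp h4.symm).resolve_right hp)
  have h5 := f.eq_smul_basis_det e
  have : f v = 0 := by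
    conv_lhs => rw [h5]
    rw [hfe]
    simp
  exact this

end ContactAux

/-- The Reeb vector fields of two generating elements of a contact circle are
linearly independent at every point.  (`ω₁, ω₂` smooth 1-forms on a
`(2n+1)`-manifold all of whose normalized combinations are contact forms;
`R₁, R₂` their Reeb fields: `ωᵢ(Rᵢ) = 1`, `Rᵢ ⨼ dωᵢ = 0`.) -/
theorem stmt7 (n : ℕ)
    (ω₁ ω₂ : (Fin (2 * n + 1) → ℝ) → (Fin (2 * n + 1) → ℝ) →L[ℝ] ℝ)
    (h₁ : ContDiff ℝ (⊤ : ℕ∞) ω₁) (h₂ : ContDiff ℝ (⊤ : ℕ∞) ω₂)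
    (R₁ R₂ : (Fin (2 * n + 1) → ℝ) → Fin (2 * n + 1) → ℝ)
    (hR₁ : ∀ x, ω₁ x (R₁ x) = 1 ∧ ∀ v, extd ω₁ x (R₁ x) v = 0)
    (hR₂ : ∀ x, ω₂ x (R₂ x) = 1 ∧ ∀ v, extd ω₂ x (R₂ x) v = 0)
    (hcircle : ∀ l₁ l₂ : ℝ, l₁ ^ 2 + l₂ ^ 2 = 1 → ∀ x,
      ∃ v : Fin (2 * n + 1) → Fin (2 * n + 1) → ℝ,
        wedgeEval n (l₁ • ω₁ x + l₂ • ω₂ x)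
          (extd (fun y => l₁ • ω₁ y + l₂ • ω₂ y) x) v ≠ 0) :
    ∀ x, LinearIndependent ℝ ![R₁ x, R₂ x] := by
  intro x
  rw [LinearIndependent.pair_iff]
  intro s t hst
  have hω₁ := (hR₁ x).1
  have hω₂ := (hR₂ x).1
  have hR1ne : R₁ x ≠ 0 := by
    intro h; rw [h] at hω₁; simp at hω₁
  have hR2ne : R₂ x ≠ 0 := by
    intro h; rw [h] at hω₂; simp at hω₂
  by_contra hcon
  rcases eq_or_ne t 0 with rfl | ht
  · have hs : s ≠ 0 := fun h => hcon ⟨h, rfl⟩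
    rw [zero_smul, add_zero] at hst
    exact hR1ne ((smul_eq_zero.mp hst).resolve_left hs)
  · set c : ℝ := -s / t with hcdef
    have hR2eq : R₂ x = c • R₁ x := by
      have h6 : t • R₂ x = (-s) • R₁ x := by
        rw [neg_smul, eq_neg_iff_add_eq_zero]
        calc t • R₂ x + s • R₁ x = s • R₁ x + t • R₂ x := by abel
        _ = 0 := hst
      calc R₂ x = t⁻¹ • (t • R₂ x) := by rw [smul_smul, inv_mul_cancel₀ ht, one_smul]
      _ = t⁻¹ • ((-s) • R₁ x) := by rw [h6]
      _ = c • R₁ x := by rw [smul_smul, hcdef]; congr 1; field_simp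
    set s₂ : ℝ := ω₂ x (R₁ x) with hs₂
    have hc1 : c * s₂ = 1 := by
      have h7 : ω₂ x (R₂ x) = c * s₂ := by rw [hR2eq, map_smul, smul_eq_mul]
      rw [← h7, hω₂]
    have hcne : c ≠ 0 := fun h => by rw [h, zero_mul] at hc1; exact zero_ne_one hc1
    have hdω₂ : ∀ w, extd ω₂ x (R₁ x) w = 0 := by
      intro w
      have h8 := (hR₂ x).2 w
      rw [hR2eq, ContactAux.extd_smul_left h₂ x c (R₁ x) w] at h8
      exact (mul_eq_zero.mp h8).resolve_left hcne
    set r : ℝ := Real.sqrt (1 + s₂ ^ 2) with hrdef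
    have hrpos : (0 : ℝ) < r := Real.sqrt_pos.mpr (by positivity)
    have hr2 : r ^ 2 = 1 + s₂ ^ 2 := Real.sq_sqrt (by positivity)
    have hrne : r ≠ 0 := ne_of_gt hrpos
    have hl : (-s₂ / r) ^ 2 + (1 / r) ^ 2 = 1 := by
      rw [div_pow, div_pow, neg_pow, ← add_div]
      rw [hr2]
      field_simp
      ring
    obtain ⟨v, hv⟩ := hcircle (-s₂ / r) (1 / r) hl x
    apply hv
    have hcont : ContDiff ℝ (⊤ : ℕ∞) (fun y => (-s₂ / r) • ω₁ y + (1 / r) • ω₂ y) :=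
      (h₁.const_smul (-s₂ / r)).add (h₂.const_smul (1 / r))
    apply ContactAux.wedge_zero _ _
      (fun z z' w => ContactAux.extd_add_left hcont x z z' w)
      (fun cc z w => ContactAux.extd_smul_left hcont x cc z w)
      (fun z w => ContactAux.extd_antisymm _ x z w)
      (R₁ x) hR1ne ?_ ?_ v
    · show ((-s₂ / r) • ω₁ x + (1 / r) • ω₂ x) (R₁ x) = 0
      rw [ContinuousLinearMap.add_apply, ContinuousLinearMap.smul_apply,
        ContinuousLinearMap.smul_apply, hω₁, ← hs₂, smul_eq_mul, smul_eq_mul]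
      field_simp
      ring
    · intro w
      rw [ContactAux.extd_comb h₁ h₂ (-s₂ / r) (1 / r) x (R₁ x) w, (hR₁ x).2 w, hdω₂ w]
      ring


end
end

section
/- Let A₁, A₂ be antisymmetric orthogonal real 4n×4n matrices with A₁A₂ + A₂A₁ = 0, and let ω₁, ω₂ be the contact forms on S^{4n−1} induced by ⟨A₁x, dx⟩, ⟨A₂x, dx⟩, with Reeb vector fields (R₁)ₓ = A₁x, (R₂)ₓ = A₂x. Then ω₁(R₂) = 0, ω₂(R₁) = 0, and R₂ ⨼ dω̃₁ + R₁ ⨼ dω̃₂ = 0 (i.e., the resulting contact circle is round). -/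
open Matrix
open scoped BigOperators

lemma sum_eq_dot {m : ℕ} (a b : Fin m → ℝ) : ∑ r, a r * b r = a ⬝ᵥ b := rfl

lemma dot_mulVec_shift {m : ℕ} (M : Matrix (Fin m) (Fin m) ℝ) (u w : Fin m → ℝ) :
    M.mulVec u ⬝ᵥ w = u ⬝ᵥ Mᵀ.mulVec w := by
  rw [Matrix.dotProduct_mulVec, Matrix.vecMul_transpose, dotProduct_comm,
    Matrix.dotProduct_mulVec, ← Matrix.mulVec_transpose, dotProduct_comm]

lemma antisym_quad_zero {m : ℕ} (B : Matrix (Fin m) (Fin m) ℝ) (hB : Bᵀ = -B)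
    (x : Fin m → ℝ) : x ⬝ᵥ B.mulVec x = 0 := by
  have h : x ⬝ᵥ B.mulVec x = -(x ⬝ᵥ B.mulVec x) := by
    conv_lhs => rw [dotProduct_comm, dot_mulVec_shift, hB, Matrix.neg_mulVec,
      dotProduct_neg]
  linarith

/-- Let `A₁, A₂` be antisymmetric orthogonal real `4n×4n` matrices with
`A₁A₂ + A₂A₁ = 0`, and let `ω₁, ω₂` be the contact forms on `S^{4n−1}` induced
by `⟨A₁x, dx⟩, ⟨A₂x, dx⟩`, with Reeb vector fields `(R₁)ₓ = A₁x`,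
`(R₂)ₓ = A₂x`.  Then `ω₁(R₂) = 0`, `ω₂(R₁) = 0`, and
`R₂ ⨼ dω̃₁ + R₁ ⨼ dω̃₂ = 0` (where `dω̃ᵢ(u,v) = ⟨Aᵢu,v⟩ − ⟨Aᵢv,u⟩`), i.e. the
resulting contact circle is round. -/
theorem stmt13 (n : ℕ)
    (A₁ A₂ : Matrix (Fin (4 * n)) (Fin (4 * n)) ℝ)
    (h₁anti : A₁ᵀ = -A₁) (h₂anti : A₂ᵀ = -A₂)
    (h₁orth : A₁ᵀ * A₁ = 1) (h₂orth : A₂ᵀ * A₂ = 1)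
    (hacomm : A₁ * A₂ + A₂ * A₁ = 0)
    (x : Fin (4 * n) → ℝ) (hx : ∑ r, x r ^ 2 = 1) :
    (∑ r, A₁.mulVec x r * A₂.mulVec x r = 0) ∧
    (∑ r, A₂.mulVec x r * A₁.mulVec x r = 0) ∧
    (∀ u : Fin (4 * n) → ℝ,
      ((∑ r, A₁.mulVec (A₂.mulVec x) r * u r) -
        (∑ r, A₁.mulVec u r * A₂.mulVec x r)) +
      ((∑ r, A₂.mulVec (A₁.mulVec x) r * u r) -
        (∑ r, A₂.mulVec u r * A₁.mulVec x r)) = 0) := by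
  have hBanti : (A₁ᵀ * A₂)ᵀ = -(A₁ᵀ * A₂) := by
    rw [Matrix.transpose_mul, Matrix.transpose_transpose, h₂anti, h₁anti,
      Matrix.neg_mul]
    have h12 : A₂ * A₁ = -(A₁ * A₂) :=
      eq_neg_of_add_eq_zero_left (by rw [add_comm]; exact hacomm)
    rw [h12, Matrix.neg_mul, neg_neg]
  have key : A₁.mulVec x ⬝ᵥ A₂.mulVec x = 0 := by
    rw [dot_mulVec_shift, Matrix.mulVec_mulVec]
    · exact antisym_quad_zero _ hBanti x
  refine ⟨key, ?_, ?_⟩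
  · rw [sum_eq_dot, dotProduct_comm]; exact key
  · intro u
    have e1 : A₁.mulVec u ⬝ᵥ A₂.mulVec x = -(A₁.mulVec (A₂.mulVec x) ⬝ᵥ u) := by
      rw [dot_mulVec_shift, h₁anti, Matrix.neg_mulVec, dotProduct_neg,
        dotProduct_comm]
    have e2 : A₂.mulVec u ⬝ᵥ A₁.mulVec x = -(A₂.mulVec (A₁.mulVec x) ⬝ᵥ u) := by
      rw [dot_mulVec_shift, h₂anti, Matrix.neg_mulVec, dotProduct_neg,
        dotProduct_comm]
    have e3 : A₁.mulVec (A₂.mulVec x) ⬝ᵥ u + A₂.mulVec (A₁.mulVec x) ⬝ᵥ u = 0 := by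
      rw [Matrix.mulVec_mulVec, Matrix.mulVec_mulVec, ← add_dotProduct,
        ← Matrix.add_mulVec, hacomm, Matrix.zero_mulVec, zero_dotProduct]
    simp only [sum_eq_dot]
    linarith [e1, e2, e3]
end

section
/- Let φ₁,…,φ_{p+1} be smooth functions on a manifold B with r = √(Σφᵢ²) > 0 at a point x, and suppose there exist μ₁,…,μ_p (not all zero, with φ_{p+1}(x) ≠ 0) such that Σᵢ₌₁^p μᵢ d(φᵢ/r) = 0 at x. Then there exist λ₁,…,λ_{p+1} with Σλᵢ² ≠ 0 (after normalization Σλᵢ² = 1) such that Σλᵢφᵢ(x) = 0 and Σλᵢ dφᵢ(x) = 0. -/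
open scoped BigOperators

set_option maxHeartbeats 1000000 in
/-- Rank computation from the Fibration Theorem: let `φ₁,…,φ_{p+1}` be smooth
functions on `B` with `r = √(Σφᵢ²) > 0` at `x` and `φ_{p+1}(x) ≠ 0`, and
suppose there are `μ₁,…,μ_p`, not all zero, with `Σᵢ μᵢ d(φᵢ/r) = 0` at `x`.
Then there are `λ₁,…,λ_{p+1}` with `Σλᵢ² = 1` such that `Σλᵢφᵢ(x) = 0` and
`Σλᵢ dφᵢ(x) = 0`. -/
theorem stmt15 {B : Type*} [NormedAddCommGroup B] [NormedSpace ℝ B] (p : ℕ)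
    (φ : Fin (p + 1) → B → ℝ) (hφ : ∀ i, ContDiff ℝ (⊤ : ℕ∞) (φ i)) (x : B)
    (hr : 0 < Real.sqrt (∑ i, φ i x ^ 2))
    (hlast : φ (Fin.last p) x ≠ 0)
    (μ : Fin p → ℝ) (hμ0 : μ ≠ 0)
    (hμ : ∑ i : Fin p, μ i •
        fderiv ℝ (fun y => φ i.castSucc y / Real.sqrt (∑ j, φ j y ^ 2)) x = 0) :
    ∃ l : Fin (p + 1) → ℝ, ∑ i, l i ^ 2 = 1 ∧
      (∑ i, l i * φ i x) = 0 ∧ (∑ i, l i • fderiv ℝ (φ i) x) = 0 := by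
  classical
  have hrxne : Real.sqrt (∑ i, φ i x ^ 2) ≠ 0 := ne_of_gt hr
  have hgpos : 0 < ∑ i, φ i x ^ 2 := Real.sqrt_pos.mp hr
  have hgne : (∑ i, φ i x ^ 2) ≠ 0 := ne_of_gt hgpos
  set rx : ℝ := Real.sqrt (∑ i, φ i x ^ 2) with hrxdef
  set D : Fin (p + 1) → B →L[ℝ] ℝ := fun i => fderiv ℝ (φ i) x with hDdef
  have hD : ∀ i, HasFDerivAt (φ i) (D i) x := fun i =>
    ((hφ i).differentiable (by simp) x).hasFDerivAt
  -- derivative of g = ∑ φ j ^2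
  have hg' : HasFDerivAt (fun y => ∑ j, φ j y ^ 2) (∑ j, (2 * φ j x) • D j) x := by
    have h1 : ∀ j : Fin (p + 1), HasFDerivAt (fun y => φ j y ^ 2) ((2 * φ j x) • D j) x := by
      intro j
      have h2 := (hD j).mul (hD j)
      have e1 : (fun y => φ j y ^ 2) = fun y => φ j y * φ j y := by
        funext y; ring
      have e2 : (2 * φ j x) • D j = φ j x • D j + φ j x • D j := by
        rw [two_mul, add_smul]
      rw [e1, e2]; exact h2
    have := HasFDerivAt.sum (u := Finset.univ) (fun j _ => h1 j)
    simpa [Finset.sum_fn] using this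
  -- derivative of sqrt
  have hr' : HasFDerivAt (fun y => Real.sqrt (∑ j, φ j y ^ 2))
      ((1 / (2 * rx)) • ∑ j, (2 * φ j x) • D j) x := hg'.sqrt hgne
  -- derivative of (sqrt)⁻¹
  have hinv : HasFDerivAt (fun y => (Real.sqrt (∑ j, φ j y ^ 2))⁻¹)
      ((-(rx ^ 2)⁻¹) • ((1 / (2 * rx)) • ∑ j, (2 * φ j x) • D j)) x :=
    (hasDerivAt_inv hrxne).comp_hasFDerivAt x hr'
  -- simplify the sqrt derivative: set S := ∑ φ j x • D j
  set S : B →L[ℝ] ℝ := ∑ j, φ j x • D j with hSdef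
  have hDr : ((1 / (2 * rx)) • ∑ j, (2 * φ j x) • D j) = rx⁻¹ • S := by
    rw [hSdef, Finset.smul_sum, Finset.smul_sum]
    refine Finset.sum_congr rfl fun j _ => ?_
    rw [smul_smul, smul_smul]
    congr 1
    field_simp
  rw [hDr] at hinv
  -- derivative of each φ i / r
  have hQ : ∀ i : Fin p, HasFDerivAt
      (fun y => φ i.castSucc y * (Real.sqrt (∑ j, φ j y ^ 2))⁻¹)
      (φ i.castSucc x • ((-(rx ^ 2)⁻¹) • (rx⁻¹ • S)) + rx⁻¹ • D i.castSucc) x := by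
    intro i
    exact (hD i.castSucc).mul hinv
  -- rewrite hμ using the computed derivatives
  have hμ' : ∑ i : Fin p, μ i •
      (φ i.castSucc x • ((-(rx ^ 2)⁻¹) • (rx⁻¹ • S)) + rx⁻¹ • D i.castSucc) = 0 := by
    rw [← hμ]
    refine Finset.sum_congr rfl fun i _ => ?_
    congr 1
    have e : (fun y => φ i.castSucc y / Real.sqrt (∑ j, φ j y ^ 2))
        = fun y => φ i.castSucc y * (Real.sqrt (∑ j, φ j y ^ 2))⁻¹ := by
      funext y; rw [div_eq_mul_inv]
    rw [e]
    exact ((hQ i).fderiv).symm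
  set m : ℝ := ∑ i : Fin p, μ i * φ i.castSucc x with hmdef
  set c : ℝ := m / rx ^ 2 with hcdef
  set A : B →L[ℝ] ℝ := ∑ i : Fin p, μ i • D i.castSucc with hAdef
  have hrx2 : rx ^ 2 = ∑ i, φ i x ^ 2 := Real.sq_sqrt hgpos.le
  have key : A = c • S := by
    have h1 : ∑ i : Fin p, μ i •
        (φ i.castSucc x • ((-(rx ^ 2)⁻¹) • (rx⁻¹ • S)) + rx⁻¹ • D i.castSucc)
        = (-(rx ^ 2)⁻¹ * rx⁻¹ * m) • S + rx⁻¹ • A := by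
      simp only [smul_add, smul_smul, Finset.sum_add_distrib]
      congr 1
      · rw [← Finset.sum_smul]
        congr 1
        rw [hmdef, Finset.mul_sum]
        exact Finset.sum_congr rfl fun i _ => by ring
      · rw [hAdef, Finset.smul_sum]
        exact Finset.sum_congr rfl fun i _ => by rw [smul_smul]; congr 1; ring
    rw [h1] at hμ'
    have h2 := congrArg (fun L : B →L[ℝ] ℝ => rx • L) hμ'
    simp only [smul_add, smul_smul, smul_zero] at h2
    have e1 : rx * (-(rx ^ 2)⁻¹ * rx⁻¹ * m) = -c := by
      rw [hcdef]; field_simp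
    have e2 : rx * rx⁻¹ = 1 := mul_inv_cancel₀ hrxne
    rw [e1, e2] at h2
    ext v
    have h3 := congrArg (fun L : B →L[ℝ] ℝ => L v) h2
    simp only [one_smul, ContinuousLinearMap.add_apply, ContinuousLinearMap.smul_apply, smul_eq_mul, ContinuousLinearMap.zero_apply] at h3
    simp only [ContinuousLinearMap.smul_apply, smul_eq_mul]
    linarith
  -- construct the unnormalized lambda
  set l₀ : Fin (p + 1) → ℝ :=
    Fin.snoc (fun i => μ i - c * φ i.castSucc x) (-(c * φ (Fin.last p) x)) with hl₀def
  have hl₀c : ∀ i : Fin p, l₀ i.castSucc = μ i - c * φ i.castSucc x := fun i => by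
    rw [hl₀def]; simp
  have hl₀l : l₀ (Fin.last p) = -(c * φ (Fin.last p) x) := by
    rw [hl₀def]; simp
  have hcrx : c * (∑ i : Fin p, φ i.castSucc x ^ 2 + φ (Fin.last p) x ^ 2) = m := by
    have hsplit : (∑ i, φ i x ^ 2) = ∑ i : Fin p, φ i.castSucc x ^ 2
        + φ (Fin.last p) x ^ 2 := Fin.sum_univ_castSucc _
    rw [← hsplit, ← hrx2, hcdef]
    field_simp
  have hsum1 : ∑ i, l₀ i * φ i x = 0 := by
    rw [Fin.sum_univ_castSucc]
    simp only [hl₀c, hl₀l]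
    have e : ∑ i : Fin p, (μ i - c * φ i.castSucc x) * φ i.castSucc x
        = m - c * ∑ i : Fin p, φ i.castSucc x ^ 2 := by
      rw [hmdef, Finset.mul_sum, ← Finset.sum_sub_distrib]
      exact Finset.sum_congr rfl fun i _ => by ring
    rw [e]
    have expand : m - c * (∑ i : Fin p, φ i.castSucc x ^ 2)
        + -(c * φ (Fin.last p) x) * φ (Fin.last p) x
        = m - c * (∑ i : Fin p, φ i.castSucc x ^ 2 + φ (Fin.last p) x ^ 2) := by ring
    rw [expand, hcrx, sub_self]
  have hsum2 : ∑ i, l₀ i • D i = 0 := by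
    rw [Fin.sum_univ_castSucc]
    simp only [hl₀c, hl₀l]
    have hSsplit : c • S = ∑ i : Fin p, (c * φ i.castSucc x) • D i.castSucc
        + (c * φ (Fin.last p) x) • D (Fin.last p) := by
      rw [hSdef, Fin.sum_univ_castSucc, smul_add, Finset.smul_sum]
      simp only [smul_smul]
    have e : ∑ i : Fin p, (μ i - c * φ i.castSucc x) • D i.castSucc
        = A - ∑ i : Fin p, (c * φ i.castSucc x) • D i.castSucc := by
      rw [hAdef, ← Finset.sum_sub_distrib]
      exact Finset.sum_congr rfl fun i _ => by ext v; simp only [ContinuousLinearMap.sub_apply, ContinuousLinearMap.smul_apply, smul_eq_mul]; ring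
    rw [e, key, hSsplit]
    ext v
    simp only [ContinuousLinearMap.add_apply, ContinuousLinearMap.sub_apply, ContinuousLinearMap.smul_apply, smul_eq_mul, ContinuousLinearMap.zero_apply]
    ring
  -- l₀ is nonzero
  have hl₀ne : ∃ i, l₀ i ≠ 0 := by
    by_contra h0
    push_neg at h0
    by_cases hc : c = 0
    · apply hμ0
      funext i
      have := h0 i.castSucc
      rw [hl₀c, hc] at this
      simpa using this
    · have := h0 (Fin.last p)
      rw [hl₀l] at this
      rcases mul_eq_zero.mp (neg_eq_zero.mp this) with h | h
      · exact hc h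
      · exact hlast h
  obtain ⟨i0, hi0⟩ := hl₀ne
  set n2 : ℝ := ∑ i, l₀ i ^ 2 with hn2def
  have hn2pos : 0 < n2 :=
    Finset.sum_pos' (fun i _ => sq_nonneg _)
      ⟨i0, Finset.mem_univ _, by positivity⟩
  have hn2ne : n2 ≠ 0 := ne_of_gt hn2pos
  have hsqne : Real.sqrt n2 ≠ 0 := ne_of_gt (Real.sqrt_pos.mpr hn2pos)
  refine ⟨fun i => l₀ i / Real.sqrt n2, ?_, ?_, ?_⟩
  · simp only [div_pow]
    rw [← Finset.sum_div, Real.sq_sqrt hn2pos.le, ← hn2def, div_self hn2ne]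
  · simp only [div_mul_eq_mul_div]
    rw [← Finset.sum_div, hsum1, zero_div]
  · simp only [div_eq_inv_mul, mul_smul, ← Finset.smul_sum]
    rw [hsum2, smul_zero]
end
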